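/- Let Ω be a finite probability space and Z_I, Z_V finite-valued random variables. The quantity E_{(a,b) ~ joint}[ log P(Z_I = a | Z_V = b) ] - E_{a ~ marginal of Z_I} E_{b ~ marginal of Z_V}[ log P(Z_I = a | Z_V = b) ] equals I(Z_I; Z_V) + KL( P_{Z_I} ⊗ P_{Z_V} ∥ P_{(Z_I, Z_V)} restricted appropriately ) when all involved conditional probabilities are positive; in particular it is an upper bound on the mutual information I(Z_I; Z_V). -/

import Mathlib

/-!
Write `j = P(a, b)`, `x = P(a) P(b)` and `c = j / P(b)` for the conditional. Termwise,
`j log c - x log c - j log (j / x) - x log (x / j) = (j - x) log P(a)`, and for fixed `a`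
both `j(a, ·)` and `P(a) P(·)` have total mass `P(a)`, so the gap between the CLUB quantity and
`I + KL` vanishes. The bound `I ≤ CLUB` is then Gibbs' inequality `KL ≥ 0`, which follows
termwise from `x log (x / y) ≥ x - y`.
-/

open scoped BigOperators Classical

noncomputable def Pr {Ω : Type*} [Fintype Ω] (p : Ω → ℝ) (E : Set Ω) : ℝ :=
  ∑ ω, if ω ∈ E then p ω else 0


open Finset Real

theorem Real.sub_le_mul_log_div {x y : ℝ} (hx : 0 ≤ x) (hy : 0 < y) :
    x - y ≤ x * log (x / y) := by
  rcases hx.eq_or_lt with rfl | hx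
  · simpa using hy.le
  have h := one_sub_inv_le_log_of_pos (div_pos hx hy)
  rw [inv_div] at h
  calc x - y = x * (1 - y / x) := by field_simp
    _ ≤ x * log (x / y) := mul_le_mul_of_nonneg_left h hx.le

theorem Finset.sum_mul_log_div_nonneg {ι : Type*} (s : Finset ι) {x y : ι → ℝ}
    (hx : ∀ i ∈ s, 0 ≤ x i) (hy : ∀ i ∈ s, 0 < y i) (hxy : ∑ i ∈ s, x i = ∑ i ∈ s, y i) :
    0 ≤ ∑ i ∈ s, x i * log (x i / y i) :=
  calc 0 = ∑ i ∈ s, (x i - y i) := by rw [sum_sub_distrib, hxy, sub_self]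
    _ ≤ _ := sum_le_sum fun i hi => sub_le_mul_log_div (hx i hi) (hy i hi)

theorem Pr_univ {Ω : Type*} [Fintype Ω] (p : Ω → ℝ) : Pr p Set.univ = ∑ ω, p ω := by
  simp [Pr]

theorem sum_Pr_inter_fiber {Ω β : Type*} [Fintype Ω] [Fintype β] (p : Ω → ℝ) (E : Set Ω)
    (Y : Ω → β) : ∑ b, Pr p (E ∩ {ω | Y ω = b}) = Pr p E := by
  unfold Pr
  rw [sum_comm]
  refine sum_congr rfl fun ω _ => ?_
  simp only [Set.mem_inter_iff, Set.mem_ofPred_eq, ite_and]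
  split_ifs <;> simp [sum_ite_eq]

theorem club_term_eq {j x y : ℝ} (hj : j ≠ 0) (hx : x ≠ 0) (hy : y ≠ 0) :
    j * log (j / y) - x * y * log (j / y) - (j * log (j / (x * y)) + x * y * log (x * y / j))
      = (j - x * y) * log x := by
  have hxy : x * y ≠ 0 := mul_ne_zero hx hy
  rw [log_div hj hy, log_div hj hxy, log_div hxy hj, log_mul hx hy]
  ring

theorem club_eq_mutualInfo_add_klDiv {α β : Type*} [Fintype α] [Fintype β]
    {j : α → β → ℝ} {mI : α → ℝ} {mV : β → ℝ} (hj : ∀ a b, j a b ≠ 0) (hmI : ∀ a, mI a ≠ 0)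
    (hmV : ∀ b, mV b ≠ 0) (hmI_sum : ∀ a, ∑ b, j a b = mI a) (hmV_sum : ∑ b, mV b = 1) :
    (∑ a, ∑ b, j a b * log (j a b / mV b)) - ∑ a, ∑ b, mI a * mV b * log (j a b / mV b)
      = ∑ a, ∑ b, j a b * log (j a b / (mI a * mV b))
        + ∑ a, ∑ b, mI a * mV b * log (mI a * mV b / j a b) := by
  have hrow : ∀ a, ∑ b, (j a b - mI a * mV b) * log (mI a) = 0 := fun a => by
    rw [← sum_mul, sum_sub_distrib, ← mul_sum, hmI_sum, hmV_sum, mul_one, sub_self, zero_mul]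
  rw [← sub_eq_zero]
  calc _ = ∑ a, ∑ b, (j a b - mI a * mV b) * log (mI a) := by
        simp only [← club_term_eq (hj _ _) (hmI _) (hmV _), sum_sub_distrib, sum_add_distrib]
    _ = 0 := sum_eq_zero fun a _ => hrow a

theorem stmt13_general {Ω S : Type*} [Fintype Ω] [Fintype S]
    (p : Ω → ℝ) (hsum : ∑ ω, p ω = 1)
    (Z_I Z_V : Ω → S)
    (hjointpos : ∀ a b : S, 0 < Pr p {ω | Z_I ω = a ∧ Z_V ω = b}) :
    (let j : S → S → ℝ := fun a b => Pr p {ω | Z_I ω = a ∧ Z_V ω = b}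
     let mI : S → ℝ := fun a => Pr p {ω | Z_I ω = a}
     let mV : S → ℝ := fun b => Pr p {ω | Z_V ω = b}
     let c : S → S → ℝ := fun a b => j a b / mV b
     let club : ℝ := (∑ a : S, ∑ b : S, j a b * Real.log (c a b))
        - ∑ a : S, ∑ b : S, mI a * mV b * Real.log (c a b)
     let mi : ℝ := ∑ a : S, ∑ b : S, j a b * Real.log (j a b / (mI a * mV b))
     let kl : ℝ := ∑ a : S, ∑ b : S, (mI a * mV b) * Real.log ((mI a * mV b) / j a b)
     club = mi + kl ∧ mi ≤ club) := by
  intro j mI mV c club mi kl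
  have hmI_sum : ∀ a, ∑ b, j a b = mI a := fun a => sum_Pr_inter_fiber p _ Z_V
  have hmV_sum : ∀ b, ∑ a, j a b = mV b := fun b =>
    (sum_congr rfl fun a _ => congrArg (Pr p) (Set.inter_comm _ _)).trans
      (sum_Pr_inter_fiber p {ω | Z_V ω = b} Z_I)
  have hmI_one : ∑ a, mI a = 1 := by
    simpa only [Set.univ_inter, Pr_univ, hsum] using sum_Pr_inter_fiber p Set.univ Z_I
  have hmV_one : ∑ b, mV b = 1 := by
    simpa only [Set.univ_inter, Pr_univ, hsum] using sum_Pr_inter_fiber p Set.univ Z_V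
  have hmI_pos : ∀ a, 0 < mI a := fun a =>
    hmI_sum a ▸ sum_pos (fun b _ => hjointpos a b) ⟨a, mem_univ a⟩
  have hmV_pos : ∀ b, 0 < mV b := fun b =>
    hmV_sum b ▸ sum_pos (fun a _ => hjointpos a b) ⟨b, mem_univ b⟩
  have hclub : club = mi + kl := club_eq_mutualInfo_add_klDiv (fun a b => (hjointpos a b).ne')
    (fun a => (hmI_pos a).ne') (fun b => (hmV_pos b).ne') hmI_sum hmV_one
  have hkl : 0 ≤ kl := by
    have hmass : ∑ q : S × S, mI q.1 * mV q.2 = ∑ q : S × S, j q.1 q.2 := by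
      rw [Fintype.sum_prod_type, Fintype.sum_prod_type, ← sum_mul_sum, hmI_one, hmV_one,
        sum_congr rfl fun a _ => hmI_sum a, hmI_one, mul_one]
    have h := sum_mul_log_div_nonneg univ
      (fun q _ => (mul_pos (hmI_pos q.1) (hmV_pos q.2)).le) (fun q _ => hjointpos q.1 q.2) hmass
    rwa [Fintype.sum_prod_type] at h
  exact ⟨hclub, by linarith⟩

/-- The CLUB upper bound on mutual information (vCLUB, Eq. (15)): with the true
conditional distribution `P(Z_I = a | Z_V = b)`, the gap between the expected conditional
log-likelihood under the joint and under the product of marginals equals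
`I(Z_I; Z_V) + KL(P_{Z_I} ⊗ P_{Z_V} ∥ P_{(Z_I,Z_V)})`; in particular it upper-bounds
the mutual information. All joint probabilities are assumed strictly positive. -/
theorem stmt13 {Ω S : Type*} [Fintype Ω] [Fintype S]
    (p : Ω → ℝ) (hp : ∀ ω, 0 ≤ p ω) (hsum : ∑ ω, p ω = 1)
    (Z_I Z_V : Ω → S)
    (hjointpos : ∀ a b : S, 0 < Pr p {ω | Z_I ω = a ∧ Z_V ω = b}) :
    (let j : S → S → ℝ := fun a b => Pr p {ω | Z_I ω = a ∧ Z_V ω = b}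
     let mI : S → ℝ := fun a => Pr p {ω | Z_I ω = a}
     let mV : S → ℝ := fun b => Pr p {ω | Z_V ω = b}
     let c : S → S → ℝ := fun a b => j a b / mV b
     let club : ℝ := (∑ a : S, ∑ b : S, j a b * Real.log (c a b))
        - ∑ a : S, ∑ b : S, mI a * mV b * Real.log (c a b)
     let mi : ℝ := ∑ a : S, ∑ b : S, j a b * Real.log (j a b / (mI a * mV b))
     let kl : ℝ := ∑ a : S, ∑ b : S, (mI a * mV b) * Real.log ((mI a * mV b) / j a b)
     club = mi + kl ∧ mi ≤ club) :=
  stmt13_general p hsum Z_I Z_V hjointpos
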